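/- Let w be a finite or infinite word over alphabet Σ, and for each i ≤ j let G(j)−G(i) ∈ ℤ^Σ denote the abelianization vector of the factor w[i+1..j] (counting occurrences of each letter). If there is a vector b ∈ ℝ^Σ and d ∈ ℝ such that ⟨b, G(i)⟩ = ⟨b, G(j)⟩ = d and ⟨b, G(l)⟩ > d for all i < l < j, then the factor w[i+1..j] is weakly abelian unbordered. -/
import Mathlib


def factor {α : Type*} (w : ℕ → α) (i n : ℕ) : List α :=
  (List.range n).map (fun k => w (i + k))

def SameFreq {α : Type*} [DecidableEq α] (u v : List α) : Prop :=
  ∀ a : α, (u.count a : ℚ) / u.length = (v.count a : ℚ) / v.length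

def WeaklyAbelianBordered {α : Type*} [DecidableEq α] (w : List α) : Prop :=
  ∃ p s : List α, p <+: w ∧ s <:+ w ∧ p ≠ [] ∧ p.length < w.length ∧
    s ≠ [] ∧ s.length < w.length ∧ SameFreq p s

/-- `G w n a` is the number of occurrences of the letter `a` in the prefix of length `n`. -/
def G {α : Type*} [DecidableEq α] (w : ℕ → α) (n : ℕ) (a : α) : ℕ :=
  (factor w 0 n).count a

lemma factor_add {α : Type*} (w : ℕ → α) (i m k : ℕ) :
    factor w i (m + k) = factor w i m ++ factor w (i + m) k := by
  simp [factor, List.range_add, Function.comp, add_assoc]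

lemma factor_length {α : Type*} (w : ℕ → α) (i n : ℕ) :
    (factor w i n).length = n := by simp [factor]

lemma G_add {α : Type*} [DecidableEq α] (w : ℕ → α) (i m : ℕ) (a : α) :
    G w (i + m) a = G w i a + (factor w i m).count a := by
  simp [G, factor_add w 0 i m, List.count_append]

/-- If the graph of `w` touches a hyperplane `⟨b, x⟩ = d` at times `i` and `j` and lies
strictly above it in between, then the factor `w[i+1..j]` is weakly abelian unbordered. -/
theorem stmt_8 {α : Type*} [DecidableEq α] [Fintype α] (w : ℕ → α)
    (b : α → ℝ) (d : ℝ) (i j : ℕ) (hij : i < j)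
    (hi : ∑ a : α, b a * (G w i a : ℝ) = d)
    (hj : ∑ a : α, b a * (G w j a : ℝ) = d)
    (hmid : ∀ l, i < l → l < j → ∑ a : α, b a * (G w l a : ℝ) > d) :
    ¬ WeaklyAbelianBordered (factor w i (j - i)) := by
  rintro ⟨p, s, hp, hs, hpne, hplt, hsne, hslt, hfreq⟩
  set n := j - i with hn
  set m := p.length with hm
  set k := s.length with hk
  have hnlen : (factor w i n).length = n := factor_length w i n
  have hm1 : 1 ≤ m := List.length_pos_iff.mpr hpne
  have hk1 : 1 ≤ k := List.length_pos_iff.mpr hsne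
  have hmn : m < n := by rwa [hnlen] at hplt
  have hkn : k < n := by rwa [hnlen] at hslt
  -- identify the prefix
  have hsplit1 : factor w i n = factor w i m ++ factor w (i + m) (n - m) := by
    rw [← factor_add]; congr 1; omega
  obtain ⟨t, ht⟩ := hp
  rw [hsplit1] at ht
  have hpeq : p = factor w i m :=
    (List.append_inj ht (by rw [factor_length])).1
  -- identify the suffix
  have hsplit2 : factor w i n = factor w i (n - k) ++ factor w (i + (n - k)) k := by
    rw [← factor_add]; congr 1; omega
  obtain ⟨t', ht'⟩ := hs
  rw [hsplit2] at ht'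
  have hseq : s = factor w (i + (n - k)) k :=
    (List.append_inj' ht' (by rw [factor_length])).2
  -- counts
  have hpc : ∀ a, G w (i + m) a = G w i a + p.count a := by
    intro a; rw [hpeq]; exact G_add w i m a
  have hsc : ∀ a, G w j a = G w (i + (n - k)) a + s.count a := by
    intro a
    have : j = (i + (n - k)) + k := by omega
    rw [this, hseq]; exact G_add w (i + (n - k)) k a
  -- sums
  have h1 : ∑ a : α, b a * (G w (i + m) a : ℝ)
      = d + ∑ a : α, b a * (p.count a : ℝ) := by
    rw [← hi, ← Finset.sum_add_distrib]
    apply Finset.sum_congr rfl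
    intro a _
    rw [hpc a]; push_cast; ring
  have h2 : ∑ a : α, b a * (G w j a : ℝ)
      = (∑ a : α, b a * (G w (i + (n - k)) a : ℝ)) + ∑ a : α, b a * (s.count a : ℝ) := by
    rw [← Finset.sum_add_distrib]
    apply Finset.sum_congr rfl
    intro a _
    rw [hsc a]; push_cast; ring
  have hpos : 0 < ∑ a : α, b a * (p.count a : ℝ) := by
    have := hmid (i + m) (by omega) (by omega)
    rw [h1] at this; linarith
  have hneg : ∑ a : α, b a * (s.count a : ℝ) < 0 := by
    have := hmid (i + (n - k)) (by omega) (by omega)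
    rw [hj] at h2; linarith
  -- same frequencies
  have hmq : (0 : ℚ) < (m : ℚ) := by exact_mod_cast hm1
  have hkq : (0 : ℚ) < (k : ℚ) := by exact_mod_cast hk1
  have key : ∀ a, (p.count a : ℝ) * k = (s.count a : ℝ) * m := by
    intro a
    have h := hfreq a
    rw [← hm, ← hk, div_eq_div_iff hmq.ne' hkq.ne'] at h
    exact_mod_cast h
  have hfinal : (k : ℝ) * ∑ a : α, b a * (p.count a : ℝ)
      = (m : ℝ) * ∑ a : α, b a * (s.count a : ℝ) := by
    rw [Finset.mul_sum, Finset.mul_sum]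
    apply Finset.sum_congr rfl
    intro a _
    linear_combination (b a) * key a
  have hkpos : (0 : ℝ) < (k : ℝ) := by exact_mod_cast hk1
  have hmpos : (0 : ℝ) < (m : ℝ) := by exact_mod_cast hm1
  nlinarith [mul_pos hkpos hpos, mul_neg_of_pos_of_neg hmpos hneg]
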